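/- Let X ∈ ℝ^{n×k} (1 < n ≤ k) have unit-norm columns and full rank. Then -log det((1/k)·X·Xᵀ) ≥ n·log(n), so the penalty h(X) = -(1/(n log n))·log det((1/k)XXᵀ) satisfies h(X) ≥ 1. -/

import Mathlib

/-! The matrix `(1/k) X Xᵀ` is positive definite (full rank) and has trace `1` (unit columns), so
its eigenvalues are positive and sum to `1`; AM-GM bounds their product, the determinant, by
`(1/n)^n`, and taking logarithms gives `n log n ≤ -log det`. -/

open Matrix

theorem Real.prod_le_sum_div_card_pow {ι : Type*} (s : Finset ι) (z : ι → ℝ)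
    (hz : ∀ i ∈ s, 0 ≤ z i) : ∏ i ∈ s, z i ≤ ((∑ i ∈ s, z i) / s.card) ^ s.card := by
  rcases s.eq_empty_or_nonempty with rfl | hs
  · simp
  have hcard : (0 : ℝ) < s.card := by exact_mod_cast hs.card_pos
  have amgm := Real.geom_mean_le_arith_mean s (fun _ ↦ 1) z (fun _ _ ↦ zero_le_one)
    (by simpa using hcard) hz
  simp only [Real.rpow_one, one_mul, Finset.sum_const, nsmul_eq_mul, mul_one] at amgm
  have hprod : 0 ≤ ∏ i ∈ s, z i := Finset.prod_nonneg hz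
  calc ∏ i ∈ s, z i = ((∏ i ∈ s, z i) ^ (s.card : ℝ)⁻¹) ^ s.card := by
        rw [← Real.rpow_natCast, ← Real.rpow_mul hprod, inv_mul_cancel₀ hcard.ne', Real.rpow_one]
    _ ≤ ((∑ i ∈ s, z i) / s.card) ^ s.card := by gcongr

theorem Matrix.PosSemidef.det_le_trace_div_card_pow {ι : Type*} [Fintype ι] [DecidableEq ι]
    {A : Matrix ι ι ℝ} (hA : A.PosSemidef) :
    A.det ≤ (A.trace / Fintype.card ι) ^ Fintype.card ι := by
  rw [hA.1.det_eq_prod_eigenvalues, hA.1.trace_eq_sum_eigenvalues]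
  simpa using Real.prod_le_sum_div_card_pow Finset.univ _ fun i _ ↦ hA.eigenvalues_nonneg i

theorem Matrix.trace_mul_transpose_self_of_unit_cols {m n : Type*} [Fintype m] [Fintype n]
    (X : Matrix m n ℝ) (hcol : ∀ j, ∑ i, X i j ^ 2 = 1) :
    (X * Xᵀ).trace = Fintype.card n := by
  simp only [trace, diag, mul_apply, transpose_apply, ← sq]
  rw [Finset.sum_comm]
  simp [hcol]

theorem Matrix.posDef_mul_transpose_self_of_rank_eq {m n : Type*} [Fintype m] [Fintype n]
    (X : Matrix m n ℝ) (hrank : X.rank = Fintype.card m) : (X * Xᵀ).PosDef := by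
  have hrows : LinearIndependent ℝ X.row := by
    rw [linearIndependent_iff_card_eq_finrank_span, Set.finrank, ← rank_eq_finrank_span_row,
      hrank]
  simpa using PosDef.mul_conjTranspose_self X (vecMul_injective_iff.mpr hrows)

theorem stmt_19_general {n k : ℕ} (hn : 1 < n)
    (X : Matrix (Fin n) (Fin k) ℝ)
    (hrank : X.rank = n)
    (hcol : ∀ j, ∑ i, X i j ^ 2 = 1) :
    (n : ℝ) * Real.log n ≤ -Real.log (((1 / (k : ℝ)) • (X * Xᵀ)).det) ∧
    1 ≤ -(1 / ((n : ℝ) * Real.log n)) * Real.log (((1 / (k : ℝ)) • (X * Xᵀ)).det) := by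
  have hk : (0 : ℝ) < k := by
    have := hrank ▸ X.rank_le_width
    exact_mod_cast (by omega : 0 < k)
  set A := (1 / (k : ℝ)) • (X * Xᵀ)
  have hdet_pos : 0 < A.det :=
    ((X.posDef_mul_transpose_self_of_rank_eq (by simpa using hrank)).smul (by positivity)).det_pos
  have htrace : A.trace = 1 := by
    simp [A, trace_smul, X.trace_mul_transpose_self_of_unit_cols hcol, hk.ne']
  have hdet_le : A.det ≤ (1 / (n : ℝ)) ^ n := by
    have hA : A.PosSemidef := X.posSemidef_self_mul_conjTranspose.smul (by positivity)
    simpa [htrace] using hA.det_le_trace_div_card_pow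
  have hlog : (n : ℝ) * Real.log n ≤ -Real.log A.det := by
    have := Real.log_le_log hdet_pos hdet_le
    rw [Real.log_pow, one_div, Real.log_inv] at this
    linarith
  have hnlogn : 0 < (n : ℝ) * Real.log n :=
    mul_pos (by positivity) (Real.log_pos (by exact_mod_cast hn))
  refine ⟨hlog, ?_⟩
  rw [neg_mul, ← mul_neg, one_div, ← div_eq_inv_mul, one_le_div hnlogn]
  exact hlog

theorem stmt_19 {n k : ℕ} (hn : 1 < n) (hnk : n ≤ k)
    (X : Matrix (Fin n) (Fin k) ℝ)
    (hrank : X.rank = n)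
    (hcol : ∀ j, ∑ i, X i j ^ 2 = 1) :
    (n : ℝ) * Real.log n ≤ -Real.log (((1 / (k : ℝ)) • (X * Xᵀ)).det) ∧
    1 ≤ -(1 / ((n : ℝ) * Real.log n)) * Real.log (((1 / (k : ℝ)) • (X * Xᵀ)).det) :=
  stmt_19_general hn X hrank hcol
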